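/- Let q ≥ 5 and let 𝒞 be the [q+1, q-3, 5]_q MDS code with weight distribution A_w. Any weight-3 coset V of 𝒞 with B_3(V) = b satisfies B_4(V) = C(q+1, 4) - (q-2)*b and, for 5 ≤ w ≤ q+1, B_w(V) = A_w + (-1)^w * ( C(q+1, w)*C(w-1, 3) - C(q-2, w-3)*b ). -/

import Mathlib

/-!
Write `N(S)` for the number of vectors of the coset `V` supported in `S`. By inclusion–exclusion,
`B_w = ∑_{|T| = w} ∑_{t ⊆ T} (-1)^{|t|} N(T \ t)`. Since `𝒞` is MDS with redundancy `4`, its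
restriction to any `q - 3` coordinates is bijective, so `N(S) = q^{|S| - 4}` as soon as `|S| ≥ 4`;
since `V` has minimum weight `3`, `N(S) = 0` for `|S| < 3` and for `|S| = 3` it counts the weight-3
vectors with support `S`. The first kind of term reproduces `A_w` up to the partial alternating
binomial sum `(-1)^w C(w-1, 3)`, and the second contributes `(-1)^(w-3) C(q-2, w-3) b`, a `3`-set
lying in `C(q-2, w-3)` sets of size `w`.
-/

open Finset Module

namespace Finset

variable {ι : Type*} [DecidableEq ι]

lemma sum_powerset_sdiff {M : Type*} [AddCommMonoid M] (T : Finset ι) (f : Finset ι → M) :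
    ∑ t ∈ T.powerset, f (T \ t) = ∑ S ∈ T.powerset, f S :=
  sum_nbij' (T \ ·) (T \ ·) (by simp) (by simp)
    (fun _ ht => Finset.sdiff_sdiff_eq_self (mem_powerset.1 ht))
    (fun _ ht => Finset.sdiff_sdiff_eq_self (mem_powerset.1 ht)) (fun _ _ => rfl)

lemma powerset_filter_subset_sdiff {s T : Finset ι} (hs : s ⊆ T) :
    {t ∈ T.powerset | s ⊆ T \ t} = (T \ s).powerset := by
  ext t
  simp only [mem_filter, mem_powerset, subset_sdiff]
  constructor
  · rintro ⟨htT, -, hd⟩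
    exact ⟨htT, hd.symm⟩
  · rintro ⟨htT, hd⟩
    exact ⟨htT, hs, hd.symm⟩

variable [Fintype ι]

lemma card_filter_powersetCard_superset {S : Finset ι} {m w : ℕ} (hS : #S = m) (hmw : m ≤ w) :
    #{T ∈ powersetCard w univ | S ⊆ T} = (Fintype.card ι - m).choose (w - m) := by
  rw [← hS, ← card_compl, ← card_powersetCard]
  refine card_nbij' (· \ S) (· ∪ S) ?_ ?_ ?_ ?_
  · intro T hT
    simp only [coe_filter, mem_powersetCard, subset_univ, true_and, Set.mem_ofPred_eq,
      mem_coe] at hT ⊢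
    refine ⟨fun i hi => mem_compl.2 (mem_sdiff.1 hi).2, ?_⟩
    rw [card_sdiff_of_subset hT.2, hT.1]
  · intro R hR
    simp only [coe_filter, mem_powersetCard, subset_univ, true_and, Set.mem_ofPred_eq,
      mem_coe] at hR ⊢
    have hd : Disjoint R S := disjoint_left.2 fun i hi => mem_compl.1 (hR.1 hi)
    exact ⟨by rw [card_union_of_disjoint hd, hR.2]; omega, subset_union_right⟩
  · intro T hT
    exact sdiff_union_of_subset (mem_filter.1 hT).2
  · intro R hR
    simp only [mem_coe, mem_powersetCard] at hR
    exact union_sdiff_cancel_right (disjoint_left.2 fun i hi => mem_compl.1 (hR.1 hi))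

lemma sum_powersetCard_sum_powersetCard {M : Type*} [AddCommMonoid M] (f : Finset ι → M)
    {m w : ℕ} (hmw : m ≤ w) :
    ∑ T ∈ powersetCard w univ, ∑ S ∈ powersetCard m T, f S =
      (Fintype.card ι - m).choose (w - m) • ∑ S ∈ powersetCard m univ, f S := by
  rw [sum_comm' (t' := powersetCard m univ) (s' := fun S => {T ∈ powersetCard w univ | S ⊆ T})
    (by intro T S; simp only [mem_powersetCard, mem_filter, subset_univ, true_and]; tauto),
    smul_sum]
  refine sum_congr rfl fun S hS => ?_
  rw [sum_const, card_filter_powersetCard_superset (mem_powersetCard.1 hS).2 hmw]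

end Finset

lemma sum_range_neg_one_pow_mul_choose_mul_pow (q w : ℕ) (hw : 4 ≤ w) :
    ∑ i ∈ range (w + 1),
        (-1 : ℤ) ^ i * w.choose i * (if 4 ≤ w - i then (q : ℤ) ^ (w - i - 4) else 0) =
      ∑ i ∈ range (w - 4), (-1 : ℤ) ^ i * w.choose i * ((q : ℤ) ^ (w - 4 - i) - 1) +
        (-1) ^ w * (w - 1).choose 3 := by
  obtain ⟨k, rfl⟩ := Nat.exists_eq_add_of_le' hw
  have alternating := Int.alternating_sum_range_choose_eq_choose (n := k + 3) (m := k)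
  rw [sum_range_succ, Nat.choose_symm_add, show k + 3 + 1 = k + 4 from rfl] at alternating
  have truncate : ∀ i ∈ range (k + 1), (-1 : ℤ) ^ i * (k + 4).choose i *
      (if 4 ≤ k + 4 - i then (q : ℤ) ^ (k + 4 - i - 4) else 0) =
        (-1) ^ i * (k + 4).choose i * (q : ℤ) ^ (k - i) := fun i hi => by
    rw [mem_range] at hi
    rw [if_pos (by omega), show k + 4 - i - 4 = k - i by omega]
  rw [← sum_subset (range_subset_range.2 (by omega : k + 1 ≤ k + 4 + 1)) fun i hi hi' => by
      rw [mem_range] at hi hi'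
      rw [if_neg (by omega), mul_zero],
    sum_congr rfl truncate, sum_range_succ]
  simp only [show k + 4 - 4 = k by omega, show k + 4 - 1 = k + 3 by omega, Nat.sub_self,
    pow_zero, mul_sub, mul_one, sum_sub_distrib, pow_add]
  linear_combination alternating

section Support

variable {ι F : Type*} [Fintype ι] [Zero F] [DecidableEq F]

def hammingSupport (u : ι → F) : Finset ι := {i | u i ≠ 0}

lemma card_hammingSupport (u : ι → F) : #(hammingSupport u) = hammingNorm u := rfl

lemma mem_hammingSupport {u : ι → F} {i : ι} : i ∈ hammingSupport u ↔ u i ≠ 0 := by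
  simp [hammingSupport]

variable [DecidableEq ι]

lemma card_filter_hammingSupport_eq (V : Finset (ι → F)) (T : Finset ι) :
    (#{u ∈ V | hammingSupport u = T} : ℤ) =
      ∑ t ∈ T.powerset, (-1) ^ #t * (#{u ∈ V | hammingSupport u ⊆ T \ t} : ℤ) := by
  have indicator : ∀ u : ι → F, (if hammingSupport u = T then 1 else 0 : ℤ) =
      ∑ t ∈ T.powerset, if hammingSupport u ⊆ T \ t then (-1) ^ #t else 0 := by
    intro u
    rw [← sum_filter]
    by_cases hu : hammingSupport u ⊆ T
    · rw [powerset_filter_subset_sdiff hu, sum_powerset_neg_one_pow_card]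
      exact if_congr (by rw [sdiff_eq_empty_iff_subset]; exact ⟨fun h => h.ge, hu.antisymm⟩)
        rfl rfl
    · rw [if_neg (fun h => hu h.le), sum_eq_zero]
      intro t ht
      exact absurd ((mem_filter.1 ht).2.trans sdiff_subset) hu
  calc (#{u ∈ V | hammingSupport u = T} : ℤ)
      = ∑ u ∈ V, ∑ t ∈ T.powerset, if hammingSupport u ⊆ T \ t then (-1) ^ #t else 0 := by
        simp only [← indicator, sum_boole]
    _ = ∑ t ∈ T.powerset, (-1) ^ #t * (#{u ∈ V | hammingSupport u ⊆ T \ t} : ℤ) := by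
        rw [sum_comm]
        refine sum_congr rfl fun t _ => ?_
        rw [sum_ite, sum_const_zero, add_zero, sum_const, nsmul_eq_mul, mul_comm]

lemma card_filter_hammingNorm_eq (V : Finset (ι → F)) (w : ℕ) :
    #{u ∈ V | hammingNorm u = w} =
      ∑ T ∈ powersetCard w univ, #{u ∈ V | hammingSupport u = T} := by
  rw [card_eq_sum_card_fiberwise (f := hammingSupport) (s := {u ∈ V | hammingNorm u = w})
    (t := powersetCard w univ)
    (fun u hu => mem_powersetCard.2 ⟨subset_univ _, (mem_filter.1 hu).2⟩)]
  refine sum_congr rfl fun T hT => ?_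
  rw [filter_filter]
  refine congrArg card (filter_congr fun u _ => ⟨And.right, fun h => ⟨?_, h⟩⟩)
  rw [← card_hammingSupport, h, (mem_powersetCard.1 hT).2]

lemma card_filter_hammingSupport_subset_of_card_le (V : Finset (ι → F)) {m : ℕ}
    (hV : ∀ u ∈ V, m ≤ hammingNorm u) {S : Finset ι} (hS : #S ≤ m) :
    #{u ∈ V | hammingSupport u ⊆ S} = if #S = m then #{u ∈ V | hammingSupport u = S} else 0 := by
  split_ifs with hSm
  · refine congrArg card (filter_congr fun u hu => ⟨fun h => eq_of_subset_of_card_le h ?_, ?_⟩)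
    · rw [card_hammingSupport, hSm]
      exact hV u hu
    · rintro rfl
      exact subset_rfl
  · refine card_eq_zero.2 (filter_eq_empty_iff.2 fun u hu h => ?_)
    have := card_le_card h
    rw [card_hammingSupport] at this
    have := hV u hu
    omega

lemma card_filter_hammingNorm_eq_of_card_filter_subset (V : Finset (ι → F)) (m : ℕ)
    (φ : ℕ → ℤ)
    (hN : ∀ S : Finset ι, (#{u ∈ V | hammingSupport u ⊆ S} : ℤ) =
      φ #S + if #S = m then (#{u ∈ V | hammingSupport u = S} : ℤ) else 0)
    {w : ℕ} (hmw : m ≤ w) :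
    (#{u ∈ V | hammingNorm u = w} : ℤ) =
      (Fintype.card ι).choose w * ∑ i ∈ range (w + 1), (-1) ^ i * w.choose i * φ (w - i) +
        (-1) ^ (w - m) * (Fintype.card ι - m).choose (w - m) * #{u ∈ V | hammingNorm u = m} := by
  have perT : ∀ T ∈ powersetCard w univ, (#{u ∈ V | hammingSupport u = T} : ℤ) =
      ∑ i ∈ range (w + 1), (-1) ^ i * w.choose i * φ (w - i) +
        (-1) ^ (w - m) * ∑ S ∈ powersetCard m T, (#{u ∈ V | hammingSupport u = S} : ℤ) := by
    intro T hT
    have hTw : #T = w := (mem_powersetCard.1 hT).2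
    calc (#{u ∈ V | hammingSupport u = T} : ℤ)
        = ∑ t ∈ T.powerset, (-1) ^ #t * φ (w - #t) + ∑ t ∈ T.powerset,
            (-1) ^ (w - #(T \ t)) *
              if #(T \ t) = m then (#{u ∈ V | hammingSupport u = T \ t} : ℤ) else 0 := by
          rw [card_filter_hammingSupport_eq, ← sum_add_distrib]
          refine sum_congr rfl fun t ht => ?_
          have htT := card_le_card (mem_powerset.1 ht)
          rw [hN, card_sdiff_of_subset (mem_powerset.1 ht), hTw, Nat.sub_sub_self (hTw ▸ htT)]
          ring
      _ = _ := by
          rw [sum_powerset_apply_card (fun i => (-1 : ℤ) ^ i * φ (w - i)),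
            sum_powerset_sdiff T (fun S => (-1 : ℤ) ^ (w - #S) * if #S = m then
              (#{u ∈ V | hammingSupport u = S} : ℤ) else 0),
            powersetCard_eq_filter, sum_filter, mul_sum, hTw]
          congr 1
          · exact sum_congr rfl fun i _ => by rw [nsmul_eq_mul]; ring
          · exact sum_congr rfl fun S _ => by split_ifs with h <;> simp [h]
  rw [card_filter_hammingNorm_eq, card_filter_hammingNorm_eq, Nat.cast_sum, Nat.cast_sum,
    sum_congr rfl perT, sum_add_distrib, sum_const, card_powersetCard, card_univ, ← mul_sum,
    sum_powersetCard_sum_powersetCard _ hmw, nsmul_eq_mul, nsmul_eq_mul]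
  ring

end Support

lemma LinearMap.natCard_fiber_of_surjective {K M N : Type*} [Field K] [AddCommGroup M]
    [Module K M] [FiniteDimensional K M] [AddCommGroup N] [Module K N] [FiniteDimensional K N]
    (f : M →ₗ[K] N) (hf : Function.Surjective f) (y : N) :
    Nat.card {x // f x = y} = Nat.card K ^ (finrank K M - finrank K N) := by
  obtain ⟨x₀, hx₀⟩ := hf y
  let e : {x // f x = y} ≃ LinearMap.ker f :=
    { toFun := fun x => ⟨x - x₀, by simp [x.2, hx₀]⟩
      invFun := fun z => ⟨z + x₀, by simp [hx₀]⟩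
      left_inv := fun x => by simp
      right_inv := fun z => by simp }
  have rank_nullity := f.finrank_range_add_finrank_ker
  rw [LinearMap.range_eq_top.2 hf, finrank_top] at rank_nullity
  rw [Nat.card_congr e, Module.natCard_eq_pow_finrank (K := K), ← rank_nullity,
    Nat.add_sub_cancel_left]

section MDS

variable {ι F : Type*} [Fintype ι] [DecidableEq ι] [Field F] [DecidableEq F]

abbrev restrictₗ (Z : Finset ι) : (ι → F) →ₗ[F] (Z → F) := LinearMap.funLeft F F (↑)

omit [DecidableEq ι] [DecidableEq F] in
lemma finrank_le_card (C : Submodule F (ι → F)) : finrank F C ≤ Fintype.card ι := by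
  simpa [finrank_fintype_fun_eq_card] using C.finrank_le

lemma surjective_restrictₗ_comp_subtype {C : Submodule F (ι → F)}
    (hC : ∀ x ∈ C, x ≠ 0 → Fintype.card ι - finrank F C < hammingNorm x)
    {Z : Finset ι} (hZ : #Z ≤ finrank F C) :
    Function.Surjective ((restrictₗ Z).comp C.subtype) := by
  obtain ⟨W, hZW, -, hW⟩ :=
    exists_subsuperset_card_eq (subset_univ Z) hZ (by simpa using finrank_le_card C)
  have injW : Function.Injective ((restrictₗ W).comp C.subtype) := by
    rw [← LinearMap.ker_eq_bot, LinearMap.ker_eq_bot']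
    intro c hc
    by_contra hne
    have hsupp : hammingSupport (c : ι → F) ⊆ Wᶜ := fun i hi =>
      mem_compl.2 fun hiW => mem_hammingSupport.1 hi (congrFun hc ⟨i, hiW⟩)
    have hle := card_le_card hsupp
    have hlt := hC c c.2 (by simpa using hne)
    rw [card_compl, hW] at hle
    rw [← card_hammingSupport] at hlt
    omega
  have surjW : Function.Surjective ((restrictₗ W).comp C.subtype) :=
    (LinearMap.injective_iff_surjective_of_finrank_eq_finrank
      (by simp [finrank_fintype_fun_eq_card, hW])).1 injW
  exact (LinearMap.funLeft_surjective_of_injective F F (fun i : Z => (⟨i, hZW i.2⟩ : W))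
    fun i j h => Subtype.ext (congrArg Subtype.val h :)).comp surjW

lemma natCard_coset_hammingSupport_subset {C : Submodule F (ι → F)}
    (hC : ∀ x ∈ C, x ≠ 0 → Fintype.card ι - finrank F C < hammingNorm x)
    (v : ι → F) {S : Finset ι} (hS : #Sᶜ ≤ finrank F C) :
    Nat.card {u : ι → F // u - v ∈ C ∧ hammingSupport u ⊆ S} =
      Nat.card F ^ (finrank F C - #Sᶜ) := by
  let e : {u : ι → F // u - v ∈ C ∧ hammingSupport u ⊆ S} ≃
      {c : C // (restrictₗ Sᶜ).comp C.subtype c = -restrictₗ Sᶜ v} :=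
    { toFun := fun u => ⟨⟨u - v, u.2.1⟩, funext fun i => by
        have : u.1 i = 0 := by
          by_contra h
          exact mem_compl.1 i.2 (u.2.2 (mem_hammingSupport.2 h))
        simp [this]⟩
      invFun := fun c => ⟨c + v, by simp, fun i hi => by
        by_contra hiS
        have := congrFun c.2 ⟨i, mem_compl.2 hiS⟩
        simp only [LinearMap.comp_apply, LinearMap.funLeft_apply, Submodule.subtype_apply,
          Pi.neg_apply] at this
        exact mem_hammingSupport.1 hi (by simp [this])⟩
      left_inv := fun u => by ext; simp
      right_inv := fun c => by ext; simp }
  rw [Nat.card_congr e,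
    LinearMap.natCard_fiber_of_surjective _ (surjective_restrictₗ_comp_subtype hC hS),
    finrank_fintype_fun_eq_card, Fintype.card_coe]

lemma card_filter_hammingSupport_subset_of_coset {C : Submodule F (ι → F)}
    (hC : ∀ x ∈ C, x ≠ 0 → Fintype.card ι - finrank F C < hammingNorm x)
    {v : ι → F} {V : Finset (ι → F)} (hV : ∀ u, u ∈ V ↔ u - v ∈ C) {m : ℕ}
    (hm : Fintype.card ι - finrank F C ≤ m + 1) (hVm : ∀ u ∈ V, m ≤ hammingNorm u)
    (S : Finset ι) :
    (#{u ∈ V | hammingSupport u ⊆ S} : ℤ) =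
      (if m < #S then (Nat.card F : ℤ) ^ (#S - (Fintype.card ι - finrank F C)) else 0) +
        if #S = m then (#{u ∈ V | hammingSupport u = S} : ℤ) else 0 := by
  by_cases hS : m < #S
  · have hSn : #S ≤ Fintype.card ι := card_le_univ S
    have hk := finrank_le_card C
    have hSc : #Sᶜ ≤ finrank F C := by rw [card_compl]; omega
    have hcount := natCard_coset_hammingSupport_subset hC v hSc
    have hfilter : Nat.card {u : ι → F // u - v ∈ C ∧ hammingSupport u ⊆ S} =
        #{u ∈ V | hammingSupport u ⊆ S} := by
      rw [← Nat.card_eq_finsetCard]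
      exact Nat.card_congr (Equiv.subtypeEquivRight fun u => by simp [hV])
    rw [card_compl, hfilter] at hcount
    rw [if_pos hS, if_neg hS.ne', add_zero, show #S - (Fintype.card ι - finrank F C) =
      finrank F C - (Fintype.card ι - #S) by omega, hcount]
    push_cast
    rfl
  · rw [card_filter_hammingSupport_subset_of_card_le V hVm (not_lt.1 hS), if_neg hS, zero_add]
    push_cast
    rfl

end MDS

theorem weight_three_coset_distribution_general (F : Type*) [Field F] [Fintype F] [DecidableEq F]
    (q : ℕ) (hcard : Fintype.card F = q)
    (C : Submodule F (Fin (q + 1) → F))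
    (hdim : Module.finrank F C = q - 3)
    (hmin : ∀ x ∈ C, x ≠ 0 → 5 ≤ hammingNorm x)
    (A : ℕ → ℤ)
    (hA : ∀ w, 5 ≤ w → A w = ((q + 1).choose w : ℤ) *
      ∑ j ∈ Finset.range (w - 4),
        (-1 : ℤ) ^ j * (w.choose j : ℤ) * ((q : ℤ) ^ (w - 4 - j) - 1))
    (v : Fin (q + 1) → F) (V : Set (Fin (q + 1) → F))
    (hV : V = {u | u - v ∈ C})
    (hwt : ∀ u ∈ V, 3 ≤ hammingNorm u)
    (B : ℕ → ℕ)
    (hB : ∀ w, B w = Nat.card {u : Fin (q + 1) → F // u ∈ V ∧ hammingNorm u = w})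
    (b : ℕ) (hb : B 3 = b) :
    (B 4 : ℤ) = ((q + 1).choose 4 : ℤ) - ((q : ℤ) - 2) * b ∧
    ∀ w, 5 ≤ w → w ≤ q + 1 → (B w : ℤ) = A w + (-1 : ℤ) ^ w *
      (((q + 1).choose w : ℤ) * ((w - 1).choose 3 : ℤ) -
        ((q - 2).choose (w - 3) : ℤ) * b) := by
  classical
  subst hV hb
  have hq2 : 2 ≤ q := hcard ▸ Fintype.one_lt_card
  set V' : Finset (Fin (q + 1) → F) := {u | u - v ∈ C}
  have hBV : ∀ w, (B w : ℤ) = #{u ∈ V' | hammingNorm u = w} := fun w => by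
    rw [hB, Nat.card_eq_fintype_card, Fintype.card_subtype, filter_filter]
    rfl
  have hN : ∀ S : Finset (Fin (q + 1)), (#{u ∈ V' | hammingSupport u ⊆ S} : ℤ) =
      (if 4 ≤ #S then (q : ℤ) ^ (#S - 4) else 0) +
        if #S = 3 then (#{u ∈ V' | hammingSupport u = S} : ℤ) else 0 := fun S => by
    have hSq : #S ≤ q + 1 := by simpa using card_le_univ S
    have hmds : ∀ x ∈ C, x ≠ 0 → Fintype.card (Fin (q + 1)) - finrank F C < hammingNorm x :=
      fun x hx h0 => by have := hmin x hx h0; simp only [Fintype.card_fin, hdim]; omega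
    rw [card_filter_hammingSupport_subset_of_coset hmds (V := V') (v := v) (by simp [V'])
      (m := 3) (by simp [hdim]; omega) (fun u hu => hwt u (mem_filter.1 hu).2) S]
    simp only [Fintype.card_fin, hdim, Nat.card_eq_fintype_card, hcard]
    split_ifs <;> first | omega | rw [show #S - (q + 1 - (q - 3)) = #S - 4 by omega]
  have master : ∀ w, 4 ≤ w → (B w : ℤ) = (q + 1).choose w *
      ∑ i ∈ range (w - 4), (-1 : ℤ) ^ i * w.choose i * ((q : ℤ) ^ (w - 4 - i) - 1) +
        (-1) ^ w * ((q + 1).choose w * (w - 1).choose 3 - (q - 2).choose (w - 3) * B 3) := by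
    intro w hw
    have sign : (-1 : ℤ) ^ (w - 3) = -(-1) ^ w := by
      obtain ⟨k, rfl⟩ := Nat.exists_eq_add_of_le' (by omega : 3 ≤ w)
      simp [pow_add]
    rw [hBV, hBV, card_filter_hammingNorm_eq_of_card_filter_subset V' 3
      (fun j => if 4 ≤ j then (q : ℤ) ^ (j - 4) else 0) hN (by omega), Fintype.card_fin,
      sum_range_neg_one_pow_mul_choose_mul_pow q w hw, show q + 1 - 3 = q - 2 by omega, sign]
    ring
  refine ⟨?_, fun w hw _ => by rw [master w (by omega), hA w hw]⟩
  rw [master 4 le_rfl]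
  norm_num [Nat.cast_sub hq2]

/-- Weight distribution of a weight-3 coset of a `[q+1, q-3, 5]_q` MDS code:
if `B₃(V) = b` then `B₄(V) = C(q+1,4) - (q-2)·b` and, for `5 ≤ w ≤ q+1`,
`B_w(V) = A_w + (-1)^w (C(q+1,w)·C(w-1,3) - C(q-2,w-3)·b)`. -/
theorem weight_three_coset_distribution (F : Type*) [Field F] [Fintype F] [DecidableEq F]
    (q : ℕ) (hq : 5 ≤ q) (hcard : Fintype.card F = q)
    (C : Submodule F (Fin (q + 1) → F))
    (hdim : Module.finrank F C = q - 3)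
    (hmin : ∀ x ∈ C, x ≠ 0 → 5 ≤ hammingNorm x)
    (hmin5 : ∃ x ∈ C, x ≠ 0 ∧ hammingNorm x = 5)
    (A : ℕ → ℤ)
    (hA : ∀ w, 5 ≤ w → A w = ((q + 1).choose w : ℤ) *
      ∑ j ∈ Finset.range (w - 4),
        (-1 : ℤ) ^ j * (w.choose j : ℤ) * ((q : ℤ) ^ (w - 4 - j) - 1))
    (hA0 : ∀ w, 1 ≤ w → w ≤ 4 → A w = 0)
    (v : Fin (q + 1) → F) (V : Set (Fin (q + 1) → F))
    (hV : V = {u | u - v ∈ C})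
    (hwt : ∀ u ∈ V, 3 ≤ hammingNorm u)
    (hwt3 : ∃ u ∈ V, hammingNorm u = 3)
    (B : ℕ → ℕ)
    (hB : ∀ w, B w = Nat.card {u : Fin (q + 1) → F // u ∈ V ∧ hammingNorm u = w})
    (b : ℕ) (hb : B 3 = b) :
    (B 4 : ℤ) = ((q + 1).choose 4 : ℤ) - ((q : ℤ) - 2) * b ∧
    ∀ w, 5 ≤ w → w ≤ q + 1 → (B w : ℤ) = A w + (-1 : ℤ) ^ w *
      (((q + 1).choose w : ℤ) * ((w - 1).choose 3 : ℤ) -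
        ((q - 2).choose (w - 3) : ℤ) * b) :=
  weight_three_coset_distribution_general F q hcard C hdim hmin A hA v V hV hwt B hB b hb
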